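/- Let d, n ≥ 2 be integers and let X ∈ 𝔹_{≠0}^{d×n} with α := ‖X‖_0. Then 1/R(α,n,d) ≤ C_P(X)/C_D(X) ≤ R(α,d,n), where R(α,d,n) := U(α,d,n)/L(α,n), with L(α,n) := (1/n)·(ᾱ_n² + (α − ᾱ_n)·(2ᾱ_n + n)), ᾱ_n := n·⌊α/n⌋, and U(α,d,n) := (n+1)·(α−d)̄_{n−1} + d − 1 + (α − d + 1 − (α−d)̄_{n−1})², and for nonnegative integers a, b the notation ā_b := b·⌊a/b⌋. -/
import Mathlib

/-- `X ∈ 𝔹_{≠0}^{d×n}`: entries in `{-1,0,1}`, no zero row, no zero column. -/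
def SignBinaryNZ {d n : ℕ} (X : Matrix (Fin d) (Fin n) ℝ) : Prop :=
  (∀ i j, X i j = -1 ∨ X i j = 0 ∨ X i j = 1) ∧
  (∀ i, ∃ j, X i j ≠ 0) ∧ (∀ j, ∃ i, X i j ≠ 0)

/-- `‖X‖₀`: number of nonzero entries of `X`. -/
noncomputable def nnzMat {d n : ℕ} (X : Matrix (Fin d) (Fin n) ℝ) : ℕ :=
  ∑ i, (Finset.univ.filter fun j => X i j ≠ 0).card

/-- `C_P(X) = Σ_i ‖X_{i:}‖₀²` (for binary matrices). -/
noncomputable def CPbin {d n : ℕ} (X : Matrix (Fin d) (Fin n) ℝ) : ℝ :=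
  ∑ i, ((Finset.univ.filter fun j => X i j ≠ 0).card : ℝ) ^ 2

/-- `C_D(X) = Σ_j ‖X_{:j}‖₀²` (for binary matrices). -/
noncomputable def CDbin {d n : ℕ} (X : Matrix (Fin d) (Fin n) ℝ) : ℝ :=
  ∑ j, ((Finset.univ.filter fun i => X i j ≠ 0).card : ℝ) ^ 2

/-- `L(α,n) = (ᾱ_n² + (α − ᾱ_n)(2ᾱ_n + n))/n` with `ᾱ_n = n⌊α/n⌋`. -/
noncomputable def Lfun (α n : ℕ) : ℝ :=
  (((n * (α / n) : ℕ) : ℝ) ^ 2 +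
    ((α : ℝ) - ((n * (α / n) : ℕ) : ℝ)) * (2 * ((n * (α / n) : ℕ) : ℝ) + (n : ℝ))) / (n : ℝ)

/-- `U(α,d,n) = (n+1)·(α−d)̄_{n−1} + d − 1 + (α − d + 1 − (α−d)̄_{n−1})²`
with `ā_b = b⌊a/b⌋`. -/
noncomputable def Ufun (α d n : ℕ) : ℝ :=
  ((n : ℝ) + 1) * (((n - 1) * ((α - d) / (n - 1)) : ℕ) : ℝ) + (d : ℝ) - 1 +
    ((α : ℝ) - (d : ℝ) + 1 - (((n - 1) * ((α - d) / (n - 1)) : ℕ) : ℝ)) ^ 2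

/-- `R(α,d,n) = U(α,d,n)/L(α,n)`. -/
noncomputable def Rfun (α d n : ℕ) : ℝ := Ufun α d n / Lfun α n

lemma sq_lin_lb (q x : ℕ) : ((q:ℝ))^2 + (2*(q:ℝ)+1)*((x:ℝ) - q) ≤ (x:ℝ)^2 := by
  have h : (0:ℤ) ≤ ((x:ℤ) - q) * ((x:ℤ) - q - 1) := by
    rcases le_or_gt (x:ℤ) (q:ℤ) with h | h
    · have := mul_nonneg (show (0:ℤ) ≤ (q:ℤ) - x by linarith) (show (0:ℤ) ≤ (q:ℤ) + 1 - x by linarith)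
      nlinarith [this]
    · exact mul_nonneg (by linarith) (by linarith)
  have h' : (0:ℝ) ≤ ((x:ℝ) - q) * ((x:ℝ) - q - 1) := by exact_mod_cast h
  nlinarith [h']

lemma sum_sq_ge (m α : ℕ) (c : Fin m → ℕ) (hs : ∑ i, c i = α) :
    (m:ℝ) * ((α / m : ℕ):ℝ)^2 + (2*((α / m : ℕ):ℝ)+1) * ((α % m : ℕ):ℝ)
      ≤ ∑ i, ((c i : ℝ))^2 := by
  rcases Nat.eq_zero_or_pos m with rfl | hm
  · have hz : α = 0 := by simpa using hs.symm
    subst hz; simp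
  have e : m * (α / m) + α % m = α := Nat.div_add_mod α m
  have hsum : ∑ i, ((c i : ℝ)) = (α : ℝ) := by exact_mod_cast congrArg (Nat.cast (R := ℝ)) hs
  have key : ∀ i ∈ Finset.univ, ((α / m : ℕ):ℝ)^2 + (2*((α / m : ℕ):ℝ)+1)*((c i:ℝ) - (α / m : ℕ)) ≤ (c i:ℝ)^2 :=
    fun i _ => sq_lin_lb _ _
  have h1 := Finset.sum_le_sum key
  have h2 : ∑ i : Fin m, (((α / m : ℕ):ℝ)^2 + (2*((α / m : ℕ):ℝ)+1)*((c i:ℝ) - (α / m : ℕ)))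
      = (m:ℝ) * ((α / m : ℕ):ℝ)^2 + (2*((α / m : ℕ):ℝ)+1) * ((α:ℝ) - m * (α / m : ℕ)) := by
    rw [Finset.sum_add_distrib, ← Finset.mul_sum, Finset.sum_sub_distrib, hsum]
    simp [Finset.card_univ]
  have eR : (α:ℝ) - (m:ℝ) * ((α / m : ℕ):ℝ) = ((α % m : ℕ):ℝ) := by
    have := congrArg (Nat.cast (R := ℝ)) e
    push_cast at this
    linarith
  rw [h2, eR] at h1
  exact h1

noncomputable def gS (cap m s : ℕ) : ℝ :=
  ((s / (cap - 1) : ℕ) : ℝ) * (cap : ℝ)^2 + (((s % (cap - 1) : ℕ) : ℝ) + 1)^2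
    + (m : ℝ) - 1 - ((s / (cap - 1) : ℕ) : ℝ)

lemma gS_step (cap m s u : ℕ) (hcap : 2 ≤ cap) (hu : u + 1 ≤ cap) :
    gS cap m s + ((u:ℝ)+1)^2 ≤ gS cap (m+1) (s+u) := by
  set n' := cap - 1 with hn'
  have hn'pos : 0 < n' := by omega
  have ht : s % n' < n' := Nat.mod_lt _ hn'pos
  rcases Nat.lt_or_ge (s % n' + u) n' with h | h
  · have hrw : s + u = n' * (s / n') + (s % n' + u) := by
      have := Nat.div_add_mod s n'; omega
    have hdiv : (s+u)/n' = s/n' := by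
      rw [hrw, Nat.mul_add_div hn'pos, Nat.div_eq_of_lt h, Nat.add_zero]
    have hmod : (s+u)%n' = s%n' + u := by
      rw [hrw, Nat.mul_add_mod, Nat.mod_eq_of_lt h]
    unfold gS
    rw [← hn', hdiv, hmod]
    push_cast
    nlinarith [mul_nonneg (Nat.cast_nonneg (α := ℝ) (s % n')) (Nat.cast_nonneg (α := ℝ) u)]
  · have hlt : s % n' + u - n' < n' := by omega
    have hrw : s + u = n' * (s / n' + 1) + (s % n' + u - n') := by
      rw [Nat.mul_add, Nat.mul_one]
      have := Nat.div_add_mod s n'; omega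
    have hdiv : (s+u)/n' = s/n' + 1 := by
      rw [hrw, Nat.mul_add_div hn'pos, Nat.div_eq_of_lt hlt, Nat.add_zero]
    have hmod : (s+u)%n' = s%n' + u - n' := by
      rw [hrw, Nat.mul_add_mod, Nat.mod_eq_of_lt hlt]
    unfold gS
    rw [← hn', hdiv, hmod]
    have ec : ((s % n' + u - n' : ℕ) : ℝ) = ((s % n' : ℕ):ℝ) + (u:ℝ) - ((cap:ℝ) - 1) := by
      have h1 : ((s % n' + u - n' : ℕ) : ℝ) = ((s % n' + u : ℕ):ℝ) - ((n':ℕ):ℝ) := by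
        rw [← Nat.cast_sub h]
      have h2 : ((n':ℕ):ℝ) = (cap:ℝ) - 1 := by
        rw [hn', Nat.cast_sub (by omega : 1 ≤ cap)]; norm_num
      rw [h1, h2]; push_cast; ring
    rw [ec]
    have f1 : ((s % n' : ℕ):ℝ) + 2 ≤ (cap:ℝ) := by exact_mod_cast (by omega : s % n' + 2 ≤ cap)
    have f2 : ((u : ℕ):ℝ) + 1 ≤ (cap:ℝ) := by exact_mod_cast hu
    push_cast
    nlinarith [mul_nonneg (by linarith : (0:ℝ) ≤ (cap:ℝ) - ((s % n' : ℕ):ℝ) - 1)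
      (by linarith : (0:ℝ) ≤ (cap:ℝ) - (u:ℝ) - 1)]

lemma sum_sq_le (cap : ℕ) (hcap : 2 ≤ cap) :
    ∀ (m : ℕ) (c : Fin m → ℕ), (∀ i, 1 ≤ c i) → (∀ i, c i ≤ cap) →
    ∑ i, ((c i : ℝ))^2 ≤ gS cap m ((∑ i, c i) - m) := by
  intro m
  induction m with
  | zero => intro c _ _; simp [gS]
  | succ m ih =>
    intro c h1 h2
    rw [Fin.sum_univ_castSucc, Fin.sum_univ_castSucc]
    set β := ∑ i : Fin m, c i.castSucc with hβdef
    have hβ : m ≤ β := by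
      calc m = ∑ _i : Fin m, 1 := by simp
      _ ≤ β := Finset.sum_le_sum (fun i _ => h1 _)
    have hx := h1 (Fin.last m)
    have hx2 := h2 (Fin.last m)
    have key := gS_step cap m (β - m) (c (Fin.last m) - 1) hcap (by omega)
    have e : β - m + (c (Fin.last m) - 1) = β + c (Fin.last m) - (m+1) := by omega
    rw [e] at key
    have ec : ((c (Fin.last m) : ℕ) : ℝ) = ((c (Fin.last m) - 1 : ℕ) : ℝ) + 1 := by
      rw [← Nat.cast_add_one, Nat.sub_add_cancel hx]
    have := ih (fun i => c i.castSucc) (fun i => h1 _) (fun i => h2 _)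
    calc ∑ i : Fin m, ((c i.castSucc : ℝ))^2 + ((c (Fin.last m) : ℝ))^2
        ≤ gS cap m (β - m) + (((c (Fin.last m) - 1 : ℕ) : ℝ) + 1)^2 := by
          rw [← ec]; exact add_le_add this le_rfl
      _ ≤ gS cap (m+1) (β + c (Fin.last m) - (m+1)) := key

lemma Lfun_eq (α n : ℕ) (hn : 1 ≤ n) :
    Lfun α n = (n:ℝ) * ((α / n : ℕ):ℝ)^2 + (2*((α / n : ℕ):ℝ)+1) * ((α % n : ℕ):ℝ) := by
  have e : n * (α / n) + α % n = α := Nat.div_add_mod α n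
  have eα : (α:ℝ) = (n:ℝ) * ((α / n : ℕ):ℝ) + ((α % n : ℕ):ℝ) := by
    exact_mod_cast (congrArg (Nat.cast (R := ℝ)) e).symm
  have hn0 : (n:ℝ) ≠ 0 := by positivity
  unfold Lfun
  rw [eα]
  push_cast
  field_simp
  ring

lemma Ufun_eq (α d n : ℕ) (hn : 2 ≤ n) (hd : d ≤ α) :
    Ufun α d n = gS n d (α - d) := by
  have e : (n-1) * ((α-d) / (n-1)) + (α-d) % (n-1) = α - d := Nat.div_add_mod _ _
  have es : (((α - d : ℕ)):ℝ) = ((n:ℝ)-1) * (((α-d)/(n-1) : ℕ):ℝ) + (((α-d)%(n-1) : ℕ):ℝ) := by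
    have := (congrArg (Nat.cast (R := ℝ)) e).symm
    push_cast at this
    rw [Nat.cast_sub (by omega : 1 ≤ n)] at this
    push_cast at this
    linarith [this]
  have eα : (α:ℝ) - (d:ℝ) = (((α - d : ℕ)):ℝ) := by
    rw [Nat.cast_sub hd]
  unfold Ufun gS
  rw [eα, es]
  rw [Nat.cast_mul, Nat.cast_sub (by omega : 1 ≤ n)]
  push_cast
  ring

lemma Lfun_pos (α n : ℕ) (hn : 1 ≤ n) (hα : n ≤ α) : 0 < Lfun α n := by
  rw [Lfun_eq α n hn]
  have hq : 1 ≤ α / n := (Nat.one_le_div_iff (by omega)).2 hα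
  have hq' : (1:ℝ) ≤ ((α / n : ℕ):ℝ) := by exact_mod_cast hq
  have hn' : (1:ℝ) ≤ (n:ℝ) := by exact_mod_cast hn
  have hr : (0:ℝ) ≤ ((α % n : ℕ):ℝ) := Nat.cast_nonneg _
  nlinarith

/-- **Theorem 5.4.** For any `X ∈ 𝔹_{≠0}^{d×n}` with `α = ‖X‖₀`:
`1/R(α,n,d) ≤ C_P(X)/C_D(X) ≤ R(α,d,n)`. -/
theorem stmt_8 (d n : ℕ) (hd : 2 ≤ d) (hn : 2 ≤ n)
    (X : Matrix (Fin d) (Fin n) ℝ) (hX : SignBinaryNZ X)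
    (α : ℕ) (hα : α = nnzMat X) :
    1 / Rfun α n d ≤ CPbin X / CDbin X ∧ CPbin X / CDbin X ≤ Rfun α d n := by
  obtain ⟨-, hrow, hcol⟩ := hX
  set r : Fin d → ℕ := fun i => (Finset.univ.filter fun j => X i j ≠ 0).card with hrdef
  set c : Fin n → ℕ := fun j => (Finset.univ.filter fun i => X i j ≠ 0).card with hcdef
  have hsr : ∑ i, r i = α := by rw [hα]; rfl
  have hsc : ∑ j, c j = α := by
    rw [hα]
    unfold nnzMat
    simp only [Finset.card_filter]
    rw [Finset.sum_comm]
    simp only [hcdef, Finset.card_filter]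
  have hr1 : ∀ i, 1 ≤ r i := by
    intro i
    obtain ⟨j, hj⟩ := hrow i
    exact Finset.card_pos.2 ⟨j, Finset.mem_filter.2 ⟨Finset.mem_univ _, hj⟩⟩
  have hrn : ∀ i, r i ≤ n := by
    intro i
    simpa using (Finset.card_le_univ _ : r i ≤ Finset.univ.card)
  have hc1 : ∀ j, 1 ≤ c j := by
    intro j
    obtain ⟨i, hi⟩ := hcol j
    exact Finset.card_pos.2 ⟨i, Finset.mem_filter.2 ⟨Finset.mem_univ _, hi⟩⟩
  have hcd : ∀ j, c j ≤ d := by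
    intro j
    simpa using (Finset.card_le_univ _ : c j ≤ Finset.univ.card)
  have hαd : d ≤ α := by
    rw [← hsr]
    calc d = ∑ _i : Fin d, 1 := by simp
    _ ≤ _ := Finset.sum_le_sum (fun i _ => hr1 i)
  have hαn : n ≤ α := by
    rw [← hsc]
    calc n = ∑ _j : Fin n, 1 := by simp
    _ ≤ _ := Finset.sum_le_sum (fun j _ => hc1 j)
  have hCP : CPbin X = ∑ i, ((r i : ℝ))^2 := rfl
  have hCD : CDbin X = ∑ j, ((c j : ℝ))^2 := rfl
  -- bounds
  have hCPL : Lfun α d ≤ CPbin X := by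
    rw [hCP, Lfun_eq α d (by omega)]
    exact sum_sq_ge d α r hsr
  have hCDL : Lfun α n ≤ CDbin X := by
    rw [hCD, Lfun_eq α n (by omega)]
    exact sum_sq_ge n α c hsc
  have hCPU : CPbin X ≤ Ufun α d n := by
    rw [hCP, Ufun_eq α d n hn hαd]
    have := sum_sq_le n hn d r hr1 hrn
    rwa [hsr] at this
  have hCDU : CDbin X ≤ Ufun α n d := by
    rw [hCD, Ufun_eq α n d hd hαn]
    have := sum_sq_le d hd n c hc1 hcd
    rwa [hsc] at this
  have hLn : 0 < Lfun α n := Lfun_pos α n (by omega) hαn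
  have hLd : 0 < Lfun α d := Lfun_pos α d (by omega) hαd
  have hCDpos : 0 < CDbin X := lt_of_lt_of_le hLn hCDL
  have hCPpos : 0 < CPbin X := lt_of_lt_of_le hLd hCPL
  have hUnd : 0 < Ufun α n d := lt_of_lt_of_le hCDpos hCDU
  have hUdn : 0 < Ufun α d n := lt_of_lt_of_le hCPpos hCPU
  constructor
  · rw [Rfun, one_div_div, div_le_div_iff₀ hUnd hCDpos]
    nlinarith [mul_nonneg hLd.le (sub_nonneg.2 hCDU), mul_nonneg (sub_nonneg.2 hCPL) hUnd.le]
  · rw [Rfun, div_le_div_iff₀ hCDpos hLn]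
    nlinarith [mul_nonneg (sub_nonneg.2 hCPU) hLn.le, mul_nonneg hUdn.le (sub_nonneg.2 hCDL)]
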